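/- arXiv:2407.06383 — 5 statements merged into one kernel-verified Lean document; each statement's English description precedes it below -/
import Mathlib

section
/- Let E be a finite nonempty set and let P : E × E → ℝ be a row-stochastic matrix for which there exists x₀ ∈ E with P(y, x₀) > 0 for every y ∈ E (this positivity holds, for instance, for the time-t transition matrix, t > 0, of a continuous-time Markov chain on E having only one irreducible class, with x₀ any state in that class). Then for any two probability mass functions μ ≠ ν on E, the total variation distance strictly decreases after one transition: d_TV(μP, νP) < d_TV(μ, ν). -/
open Finset

lemma abs_sum_lt_sum_abs_of_sign_change {E : Type*} [Fintype E] (h : E → ℝ) (a b : E)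
    (ha : 0 < h a) (hb : h b < 0) : |∑ x, h x| < ∑ x, |h x| := by
  set A := ∑ x, max (h x) 0 with hA
  set B := ∑ x, max (-h x) 0 with hB
  have hApos : 0 < A := by
    have h1 : max (h a) 0 ≤ A :=
      Finset.single_le_sum (f := fun x => max (h x) 0)
        (fun i _ => le_max_right _ _) (Finset.mem_univ a)
    have h2 : h a ≤ max (h a) 0 := le_max_left _ _
    linarith
  have hBpos : 0 < B := by
    have h1 : max (-h b) 0 ≤ B :=
      Finset.single_le_sum (f := fun x => max (-h x) 0)
        (fun i _ => le_max_right _ _) (Finset.mem_univ b)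
    have h2 : -h b ≤ max (-h b) 0 := le_max_left _ _
    linarith
  have hsum : ∑ x, h x = A - B := by
    rw [hA, hB, ← Finset.sum_sub_distrib]
    refine Finset.sum_congr rfl fun x _ => ?_
    rcases le_total (h x) 0 with h' | h'
    · rw [max_eq_right h', max_eq_left (neg_nonneg.mpr h')]; ring
    · rw [max_eq_left h', max_eq_right (neg_nonpos.mpr h')]; ring
  have habs : ∑ x, |h x| = A + B := by
    rw [hA, hB, ← Finset.sum_add_distrib]
    refine Finset.sum_congr rfl fun x _ => ?_
    rcases le_total (h x) 0 with h' | h'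
    · rw [abs_of_nonpos h', max_eq_right h', max_eq_left (neg_nonneg.mpr h')]; ring
    · rw [abs_of_nonneg h', max_eq_left h', max_eq_right (neg_nonpos.mpr h')]; ring
  rw [hsum, habs, abs_lt]
  constructor <;> linarith

/-- Total variation distance between two probability mass functions on a finite set. -/
noncomputable def dTVfin {E : Type*} [Fintype E] (μ ν : E → ℝ) : ℝ :=
  (1 / 2) * ∑ x, |μ x - ν x|

/-- For a row-stochastic matrix `P` on a finite nonempty set admitting a state `x₀`
that every state reaches with positive probability in one step, the total variation
distance between two distinct distributions strictly decreases after one transition. -/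
theorem dTVfin_mul_lt {E : Type*} [Fintype E] [Nonempty E]
    (P : E → E → ℝ)
    (hPnonneg : ∀ x y, 0 ≤ P x y)
    (hProw : ∀ x, ∑ y, P x y = 1)
    (hpos : ∃ x₀ : E, ∀ y : E, 0 < P y x₀)
    (μ ν : E → ℝ)
    (hμnonneg : ∀ x, 0 ≤ μ x) (hμsum : ∑ x, μ x = 1)
    (hνnonneg : ∀ x, 0 ≤ ν x) (hνsum : ∑ x, ν x = 1)
    (hμν : μ ≠ ν) :
    dTVfin (fun y => ∑ x, μ x * P x y) (fun y => ∑ x, ν x * P x y) < dTVfin μ ν := by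
  obtain ⟨x₀, hx₀⟩ := hpos
  set f : E → ℝ := fun x => μ x - ν x with hf
  have hfsum : ∑ x, f x = 0 := by
    simp [hf, Finset.sum_sub_distrib, hμsum, hνsum]
  -- there exist a with f a > 0 and b with f b < 0
  have hne : ∃ a, f a ≠ 0 := by
    by_contra hc
    push_neg at hc
    exact hμν (funext fun x => by have := hc x; simp [hf, sub_eq_zero] at this; exact this)
  obtain ⟨a₀, ha₀⟩ := hne
  have hab : ∃ a b, 0 < f a ∧ f b < 0 := by
    rcases lt_or_gt_of_ne ha₀ with hneg | hpos'
    · -- f a₀ < 0, need some positive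
      by_contra hc
      push_neg at hc
      have hle : ∀ x ∈ Finset.univ, f x ≤ 0 := by
        intro x _
        by_contra hx
        push_neg at hx
        exact absurd (hc x a₀ hx) (not_le.mpr hneg)
      have hsle : ∑ x, f x < 0 := by
        have := Finset.sum_lt_sum hle ⟨a₀, Finset.mem_univ a₀, hneg⟩
        simpa using this
      linarith [hfsum, hsle]
    · by_contra hc
      push_neg at hc
      have hge : ∀ x ∈ Finset.univ, 0 ≤ f x := by
        intro x _
        by_contra hx
        push_neg at hx
        exact absurd (hc a₀ x hpos') (not_le.mpr hx)
      have hsgt : 0 < ∑ x, f x := by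
        have := Finset.sum_lt_sum hge ⟨a₀, Finset.mem_univ a₀, hpos'⟩
        simpa using this
      linarith [hfsum]
  obtain ⟨a, b, hfa, hfb⟩ := hab
  -- main inequality on sums
  have key : ∑ y, |∑ x, f x * P x y| < ∑ x, |f x| := by
    have step1 : ∑ y, |∑ x, f x * P x y| < ∑ y, ∑ x, |f x| * P x y := by
      apply Finset.sum_lt_sum
      · intro y _
        calc |∑ x, f x * P x y| ≤ ∑ x, |f x * P x y| := Finset.abs_sum_le_sum_abs _ _
          _ = ∑ x, |f x| * P x y := by
              refine Finset.sum_congr rfl fun x _ => ?_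
              rw [abs_mul, abs_of_nonneg (hPnonneg x y)]
      · refine ⟨x₀, Finset.mem_univ x₀, ?_⟩
        have hstrict := abs_sum_lt_sum_abs_of_sign_change (fun x => f x * P x x₀) a b
          (mul_pos hfa (hx₀ a)) (mul_neg_of_neg_of_pos hfb (hx₀ b))
        calc |∑ x, f x * P x x₀| < ∑ x, |f x * P x x₀| := hstrict
          _ = ∑ x, |f x| * P x x₀ := by
              refine Finset.sum_congr rfl fun x _ => ?_
              rw [abs_mul, abs_of_nonneg (hPnonneg x x₀)]
    calc ∑ y, |∑ x, f x * P x y| < ∑ y, ∑ x, |f x| * P x y := step1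
      _ = ∑ x, |f x| * ∑ y, P x y := by
          rw [Finset.sum_comm]
          exact Finset.sum_congr rfl fun x _ => (Finset.mul_sum _ _ _).symm
      _ = ∑ x, |f x| := by simp [hProw]
  unfold dTVfin
  have hrw : ∀ y, (∑ x, μ x * P x y) - (∑ x, ν x * P x y) = ∑ x, f x * P x y := by
    intro y
    rw [← Finset.sum_sub_distrib]
    exact Finset.sum_congr rfl fun x _ => by rw [hf]; ring
  simp only [hrw]
  have : ∑ x, |μ x - ν x| = ∑ x, |f x| := rfl
  rw [this]
  linarith [key]
end

section
/- Let E be a finite nonempty set and let P : E × E → ℝ be a row-stochastic matrix for which there exists x₀ ∈ E with P(y, x₀) > 0 for every y ∈ E. Suppose the probability mass function ν on E is stationary for P, i.e., νP = ν. Then for every probability mass function μ ≠ ν on E, d_TV(μP, ν) < d_TV(μ, ν); that is, the total variation distance to the stationary distribution strictly decreases after one transition. -/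
open Finset

lemma abs_sum_lt_of_signs {E : Type*} [Fintype E] (g : E → ℝ) (a b : E)
    (ha : 0 < g a) (hb : g b < 0) : |∑ x, g x| < ∑ x, |g x| := by
  have h1 : ∑ x, g x = (∑ x, max (g x) 0) - ∑ x, max (-g x) 0 := by
    rw [← Finset.sum_sub_distrib]
    apply Finset.sum_congr rfl
    intro x _
    rcases le_total (g x) 0 with h | h
    · rw [max_eq_right h, max_eq_left (by linarith)]; ring
    · rw [max_eq_left h, max_eq_right (by linarith)]; ring
  have h2 : ∑ x, |g x| = (∑ x, max (g x) 0) + ∑ x, max (-g x) 0 := by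
    rw [← Finset.sum_add_distrib]
    apply Finset.sum_congr rfl
    intro x _
    rcases le_total (g x) 0 with h | h
    · rw [max_eq_right h, max_eq_left (by linarith), abs_of_nonpos h]; ring
    · rw [max_eq_left h, max_eq_right (by linarith), abs_of_nonneg h]; ring
  have hSp : 0 < ∑ x, max (g x) 0 :=
    Finset.sum_pos' (fun x _ => le_max_right _ _)
      ⟨a, Finset.mem_univ a, lt_max_iff.2 (Or.inl ha)⟩
  have hSn : 0 < ∑ x, max (-g x) 0 :=
    Finset.sum_pos' (fun x _ => le_max_right _ _)
      ⟨b, Finset.mem_univ b, lt_max_iff.2 (Or.inl (by linarith))⟩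
  rw [h1, h2, abs_sub_lt_iff]
  constructor <;> linarith

/-- For a row-stochastic matrix `P` on a finite nonempty set admitting a state `x₀`
that every state reaches with positive probability in one step, and a stationary
distribution `ν`, the total variation distance of any distribution `μ ≠ ν` to `ν`
strictly decreases after one transition. -/
theorem dTVfin_mul_stationary_lt {E : Type*} [Fintype E] [Nonempty E]
    (P : E → E → ℝ)
    (hPnonneg : ∀ x y, 0 ≤ P x y)
    (hProw : ∀ x, ∑ y, P x y = 1)
    (hpos : ∃ x₀ : E, ∀ y : E, 0 < P y x₀)
    (ν : E → ℝ)
    (hνnonneg : ∀ x, 0 ≤ ν x) (hνsum : ∑ x, ν x = 1)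
    (hstat : ∀ y, ∑ x, ν x * P x y = ν y)
    (μ : E → ℝ)
    (hμnonneg : ∀ x, 0 ≤ μ x) (hμsum : ∑ x, μ x = 1)
    (hμν : μ ≠ ν) :
    dTVfin (fun y => ∑ x, μ x * P x y) ν < dTVfin μ ν := by
  obtain ⟨x₀, hx₀⟩ := hpos
  set f : E → ℝ := fun x => μ x - ν x with hf
  have hfsum : ∑ x, f x = 0 := by
    simp only [hf, Finset.sum_sub_distrib, hμsum, hνsum, sub_self]
  obtain ⟨c, hc⟩ : ∃ c, f c ≠ 0 := by
    by_contra h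
    push_neg at h
    apply hμν
    funext x
    have := h x
    simp only [hf] at this
    linarith
  have hApos : ∃ a, 0 < f a := by
    by_contra h
    push_neg at h
    have hlt : ∑ x, f x < ∑ x, (0 : ℝ) :=
      Finset.sum_lt_sum (fun x _ => h x)
        ⟨c, Finset.mem_univ c, lt_of_le_of_ne (h c) hc⟩
    simp at hlt
    linarith
  have hBneg : ∃ b, f b < 0 := by
    by_contra h
    push_neg at h
    have hne : ∃ x, f x ≠ 0 := ⟨c, hc⟩
    have hlt : ∑ x, (0 : ℝ) < ∑ x, f x :=
      Finset.sum_lt_sum (fun x _ => h x)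
        ⟨c, Finset.mem_univ c, lt_of_le_of_ne (h c) (Ne.symm hc)⟩
    simp at hlt
    linarith
  obtain ⟨a, ha⟩ := hApos
  obtain ⟨b, hb⟩ := hBneg
  have hrw : ∀ y, (∑ x, μ x * P x y) - ν y = ∑ x, f x * P x y := by
    intro y
    rw [← hstat y, ← Finset.sum_sub_distrib]
    apply Finset.sum_congr rfl
    intro x _
    simp only [hf]
    ring
  have habs : ∀ y, ∑ x, |f x * P x y| = ∑ x, |f x| * P x y := by
    intro y
    apply Finset.sum_congr rfl
    intro x _
    rw [abs_mul, abs_of_nonneg (hPnonneg x y)]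
  have hstep : ∑ y, |∑ x, f x * P x y| < ∑ y, ∑ x, |f x| * P x y := by
    apply Finset.sum_lt_sum
    · intro y _
      calc |∑ x, f x * P x y| ≤ ∑ x, |f x * P x y| := Finset.abs_sum_le_sum_abs _ _
        _ = ∑ x, |f x| * P x y := habs y
    · refine ⟨x₀, Finset.mem_univ x₀, ?_⟩
      calc |∑ x, f x * P x x₀| < ∑ x, |f x * P x x₀| :=
            abs_sum_lt_of_signs _ a b (mul_pos ha (hx₀ a))
              (mul_neg_of_neg_of_pos hb (hx₀ b))
        _ = ∑ x, |f x| * P x x₀ := habs x₀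
  have hsum2 : ∑ y, ∑ x, |f x| * P x y = ∑ x, |f x| := by
    rw [Finset.sum_comm]
    apply Finset.sum_congr rfl
    intro x _
    rw [← Finset.mul_sum, hProw, mul_one]
  have hkey : ∑ y, |(∑ x, μ x * P x y) - ν y| < ∑ x, |μ x - ν x| := by
    simp only [hrw]
    rw [← hsum2]
    exact hstep
  unfold dTVfin
  linarith
end

section
/- Let π be a measure on a measurable space E, let B ⊆ E be measurable with 0 < π(B) < ∞, and let A₁, …, A_n ⊆ B be pairwise disjoint measurable sets with π(A_i) > 0 for each i ∈ {1, …, n}. Let a₁, …, a_n ≥ 0 satisfy Σ_{i=1}^n a_i = 1, and set ν_i := π(A_i)/π(B). Then the total variation distance between the mixture Σ_{i=1}^n a_i π^{A_i} and the conditioned measure π^B equals Σ over those i with a_i > ν_i of (a_i − ν_i); that is, sup over measurable F ⊆ E of |Σ_{i=1}^n a_i π^{A_i}(F) − π^B(F)| = Σ_{i : a_i > ν_i} (a_i − ν_i). -/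
/-! Write `pᵢ = π^{Aᵢ}(F)` and `ρ = π(F ∩ (B \ ⋃ Aᵢ)) / π(B)`. Splitting `F ∩ B` along the `Aᵢ`
gives `Σ aᵢ π^{Aᵢ}(F) − π^B(F) = Σ (aᵢ − νᵢ) pᵢ − ρ` with `0 ≤ pᵢ ≤ 1` and
`0 ≤ ρ ≤ 1 − Σ νᵢ = Σ (aᵢ − νᵢ)`. Keeping only the positive coefficients bounds `Σ (aᵢ − νᵢ) pᵢ`
by `Σ_{aᵢ > νᵢ} (aᵢ − νᵢ)`; applied to `1 − pᵢ` this bounds `ρ − Σ (aᵢ − νᵢ) pᵢ` as well. The set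
`F = ⋃_{aᵢ > νᵢ} Aᵢ` has `pᵢ = 1` exactly for `aᵢ > νᵢ` and `ρ = 0`, so it attains the bound. -/

open MeasureTheory Finset

/-- The value on the set `S` of the measure `π` conditioned on `A`:
`π^A(S) = π(S ∩ A) / π(A)`. -/
noncomputable def condMeas {E : Type*} [MeasurableSpace E]
    (π : Measure E) (A S : Set E) : ℝ :=
  (π (S ∩ A)).toReal / (π A).toReal

lemma sum_sub_mul_le_sum_filter_lt {ι : Type*} [Fintype ι] (a ν p : ι → ℝ)
    (hp0 : ∀ i, 0 ≤ p i) (hp1 : ∀ i, p i ≤ 1) :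
    ∑ i, (a i - ν i) * p i ≤ ∑ i with ν i < a i, (a i - ν i) := by
  rw [sum_filter]
  gcongr with i
  split_ifs with h
  · exact mul_le_of_le_one_right (by linarith) (hp1 i)
  · exact mul_nonpos_of_nonpos_of_nonneg (by linarith) (hp0 i)

lemma abs_sum_sub_mul_sub_le {ι : Type*} [Fintype ι] (a ν p : ι → ℝ) (ρ : ℝ)
    (hp0 : ∀ i, 0 ≤ p i) (hp1 : ∀ i, p i ≤ 1) (hρ0 : 0 ≤ ρ) (hρ : ρ ≤ ∑ i, a i - ∑ i, ν i) :
    |∑ i, (a i - ν i) * p i - ρ| ≤ ∑ i with ν i < a i, (a i - ν i) := by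
  have hcompl := sum_sub_mul_le_sum_filter_lt a ν (fun i => 1 - p i)
    (fun i => sub_nonneg.mpr (hp1 i)) (fun i => sub_le_self 1 (hp0 i))
  have hexp : ∑ i, (a i - ν i) * (1 - p i) = ∑ i, a i - ∑ i, ν i - ∑ i, (a i - ν i) * p i := by
    simp only [mul_sub, mul_one, sum_sub_distrib]
  rw [abs_le]
  constructor
  · linarith
  · linarith [sum_sub_mul_le_sum_filter_lt a ν p hp0 hp1]

section

open Set Function

variable {E : Type*} [MeasurableSpace E] {π : Measure E}

lemma condMeas_nonneg (A S : Set E) : 0 ≤ condMeas π A S := by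
  unfold condMeas; positivity

lemma condMeas_le_one (A S : Set E) : condMeas π A S ≤ 1 := by
  rcases eq_or_ne (π A) ⊤ with hA | hA
  · simp [condMeas, hA]
  · exact div_le_one_of_le₀ (ENNReal.toReal_mono hA (measure_mono inter_subset_right))
      ENNReal.toReal_nonneg

variable {ι : Type*} {A : ι → Set E} {B F : Set E}

lemma condMeas_biUnion [DecidableEq ι] (hAd : Pairwise (Disjoint on A))
    (hA0 : ∀ i, π (A i) ≠ 0) (hAfin : ∀ i, π (A i) ≠ ⊤) (S : Finset ι) (j : ι) :
    condMeas π (A j) (⋃ i ∈ S, A i) = if j ∈ S then 1 else 0 := by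
  split_ifs with hj
  · rw [condMeas, inter_eq_right.mpr (Finset.subset_set_biUnion_of_mem hj)]
    exact div_self (ENNReal.toReal_ne_zero.mpr ⟨hA0 j, hAfin j⟩)
  · have : Disjoint (⋃ i ∈ S, A i) (A j) :=
      disjoint_iUnion₂_left.mpr fun i hi => hAd (ne_of_mem_of_not_mem hi hj)
    simp [condMeas, this.inter_eq]

variable [Fintype ι]

lemma measureReal_inter_eq_sum_add_sdiff_iUnion (hF : MeasurableSet F)
    (hA : ∀ i, MeasurableSet (A i)) (hAB : ∀ i, A i ⊆ B) (hAd : Pairwise (Disjoint on A))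
    (hB : π B ≠ ⊤) :
    π.real (F ∩ B) = ∑ i, π.real (F ∩ A i) + π.real (F ∩ (B \ ⋃ i, A i)) := by
  have hunion : F ∩ B ∩ ⋃ i, A i = ⋃ i, F ∩ A i := by
    simp only [inter_iUnion, inter_assoc, inter_eq_right.mpr (hAB _)]
  rw [← measureReal_inter_add_sdiff (MeasurableSet.iUnion hA)
      (measure_ne_top_of_subset inter_subset_right hB), hunion,
    measureReal_iUnion_fintype (fun i j hij => (hAd hij).mono inter_subset_right inter_subset_right)
      (fun i => hF.inter (hA i))
      (fun i => measure_ne_top_of_subset (inter_subset_right.trans (hAB i)) hB), inter_sdiff_assoc]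

lemma measureReal_inter_sdiff_iUnion_div_le (hA : ∀ i, MeasurableSet (A i))
    (hAB : ∀ i, A i ⊆ B) (hAd : Pairwise (Disjoint on A)) (hB0 : π B ≠ 0) (hB : π B ≠ ⊤) :
    π.real (F ∩ (B \ ⋃ i, A i)) / π.real B ≤ 1 - ∑ i, π.real (A i) / π.real B := by
  have hB_eq := measureReal_inter_eq_sum_add_sdiff_iUnion MeasurableSet.univ hA hAB hAd hB
  simp only [univ_inter] at hB_eq
  rw [← sum_div, one_sub_div (measureReal_ne_zero_iff hB |>.mpr hB0)]
  gcongr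
  calc π.real (F ∩ (B \ ⋃ i, A i)) ≤ π.real (B \ ⋃ i, A i) :=
        measureReal_mono inter_subset_right (measure_ne_top_of_subset sdiff_subset hB)
    _ = _ := by linarith

lemma sum_mul_condMeas_sub_condMeas_eq (hF : MeasurableSet F)
    (hA : ∀ i, MeasurableSet (A i)) (hAB : ∀ i, A i ⊆ B) (hAd : Pairwise (Disjoint on A))
    (hA0 : ∀ i, π (A i) ≠ 0) (hB : π B ≠ ⊤) (a : ι → ℝ) :
    ∑ i, a i * condMeas π (A i) F - condMeas π B F
      = ∑ i, (a i - π.real (A i) / π.real B) * condMeas π (A i) F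
        - π.real (F ∩ (B \ ⋃ i, A i)) / π.real B := by
  have hweight : ∀ i, π.real (A i) / π.real B * condMeas π (A i) F
      = π.real (F ∩ A i) / π.real B := fun i => by
    have : π.real (A i) ≠ 0 :=
      (measureReal_ne_zero_iff (measure_ne_top_of_subset (hAB i) hB)).mpr (hA0 i)
    change _ * (π.real (F ∩ A i) / π.real (A i)) = _
    field_simp
  have hcondB : condMeas π B F = ∑ i, π.real (A i) / π.real B * condMeas π (A i) F
      + π.real (F ∩ (B \ ⋃ i, A i)) / π.real B := by
    simp only [hweight, ← sum_div, ← add_div,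
      ← measureReal_inter_eq_sum_add_sdiff_iUnion hF hA hAB hAd hB]
    rfl
  simp only [hcondB, sub_mul, sum_sub_distrib]
  ring

lemma sum_mul_condMeas_sub_condMeas_biUnion [DecidableEq ι] (hA : ∀ i, MeasurableSet (A i))
    (hAB : ∀ i, A i ⊆ B) (hAd : Pairwise (Disjoint on A)) (hA0 : ∀ i, π (A i) ≠ 0)
    (hB : π B ≠ ⊤) (a : ι → ℝ) (S : Finset ι) :
    ∑ i, a i * condMeas π (A i) (⋃ i ∈ S, A i) - condMeas π B (⋃ i ∈ S, A i)
      = ∑ i ∈ S, (a i - π.real (A i) / π.real B) := by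
  have hresidual : (⋃ i ∈ S, A i) ∩ (B \ ⋃ i, A i) = ∅ :=
    disjoint_sdiff_right.mono_left (iUnion₂_subset fun i _ => subset_iUnion A i) |>.inter_eq
  rw [sum_mul_condMeas_sub_condMeas_eq (Finset.measurableSet_biUnion S fun i _ => hA i) hA hAB hAd
      hA0 hB, hresidual, measureReal_empty, zero_div, sub_zero]
  simp only [condMeas_biUnion hAd hA0 fun i => measure_ne_top_of_subset (hAB i) hB, mul_ite,
    mul_one, mul_zero, sum_ite_mem, Finset.univ_inter]

end

theorem dTV_mixture_cond_general {E : Type*} [MeasurableSpace E]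
    (π : Measure E) (B : Set E)
    (hBpos : 0 < π B) (hBfin : π B < ⊤)
    (n : ℕ) (A : Fin n → Set E)
    (hAmeas : ∀ i, MeasurableSet (A i))
    (hAB : ∀ i, A i ⊆ B)
    (hAdisj : Pairwise (Function.onFun Disjoint A))
    (hApos : ∀ i, 0 < π (A i))
    (a : Fin n → ℝ) (hasum : ∑ i, a i = 1) :
    (⨆ F : {F : Set E // MeasurableSet F},
        |(∑ i, a i * condMeas π (A i) F.1) - condMeas π B F.1|)
      = ∑ i ∈ Finset.univ.filter
          (fun i => (π (A i)).toReal / (π B).toReal < a i),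
          (a i - (π (A i)).toReal / (π B).toReal) := by
  simp only [← measureReal_def]
  have hA0 i : π (A i) ≠ 0 := (hApos i).ne'
  have hbound (F : {F : Set E // MeasurableSet F}) :
      |∑ i, a i * condMeas π (A i) F.1 - condMeas π B F.1|
        ≤ ∑ i with π.real (A i) / π.real B < a i, (a i - π.real (A i) / π.real B) := by
    rw [sum_mul_condMeas_sub_condMeas_eq F.2 hAmeas hAB hAdisj hA0 hBfin.ne]
    refine abs_sum_sub_mul_sub_le _ _ _ _ (fun i => condMeas_nonneg _ _)
      (fun i => condMeas_le_one _ _) (by positivity) ?_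
    rw [hasum]
    exact measureReal_inter_sdiff_iUnion_div_le hAmeas hAB hAdisj hBpos.ne' hBfin.ne
  set S : Finset (Fin n) := {i | π.real (A i) / π.real B < a i}
  have hattained :
      |∑ i, a i * condMeas π (A i) (⋃ i ∈ S, A i) - condMeas π B (⋃ i ∈ S, A i)|
        = ∑ i ∈ S, (a i - π.real (A i) / π.real B) := by
    rw [sum_mul_condMeas_sub_condMeas_biUnion hAmeas hAB hAdisj hA0 hBfin.ne]
    exact abs_of_nonneg (sum_nonneg fun i hi => sub_nonneg.2 (mem_filter.1 hi).2.le)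
  exact le_antisymm (ciSup_le hbound) (le_ciSup_of_le ⟨_, Set.forall_mem_range.2 hbound⟩
    ⟨_, Finset.measurableSet_biUnion S fun i _ => hAmeas i⟩ hattained.ge)

/-- The total variation distance between a mixture `Σᵢ aᵢ π^{Aᵢ}` of conditioned
measures and the conditioned measure `π^B`, where the `Aᵢ ⊆ B` are pairwise
disjoint, equals `Σ_{i : aᵢ > νᵢ} (aᵢ − νᵢ)` with `νᵢ = π(Aᵢ)/π(B)`. -/
theorem dTV_mixture_cond {E : Type*} [MeasurableSpace E]
    (π : Measure E) (B : Set E) (hB : MeasurableSet B)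
    (hBpos : 0 < π B) (hBfin : π B < ⊤)
    (n : ℕ) (A : Fin n → Set E)
    (hAmeas : ∀ i, MeasurableSet (A i))
    (hAB : ∀ i, A i ⊆ B)
    (hAdisj : Pairwise (Function.onFun Disjoint A))
    (hApos : ∀ i, 0 < π (A i))
    (a : Fin n → ℝ) (ha : ∀ i, 0 ≤ a i) (hasum : ∑ i, a i = 1) :
    (⨆ F : {F : Set E // MeasurableSet F},
        |(∑ i, a i * condMeas π (A i) F.1) - condMeas π B F.1|)
      = ∑ i ∈ Finset.univ.filter
          (fun i => (π (A i)).toReal / (π B).toReal < a i),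
          (a i - (π (A i)).toReal / (π B).toReal) :=
  dTV_mixture_cond_general π B hBpos hBfin n A hAmeas hAB hAdisj hApos a hasum
end

section
/- Let (π_k)_{k ∈ ℕ} be a sequence of measures on a measurable space E, let B ⊆ E be measurable with 0 < π_k(B) < ∞ for every k, and let A₁, …, A_n ⊆ B be pairwise disjoint measurable sets with π_k(A_i) > 0 for every k and every i ∈ {1, …, n}. Suppose that for each i the limit ν_i := lim_{k → ∞} π_k(A_i)/π_k(B) exists and lies in [0, 1). Then for any a₁, …, a_n ≥ 0 with Σ_{i=1}^n a_i = 1, one has lim_{k → ∞} d_TV(Σ_{i=1}^n a_i π_k^{A_i}, π_k^B) = Σ over those i with a_i > ν_i of (a_i − ν_i). -/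
open MeasureTheory Finset Filter Topology

lemma toReal_compl_inter {E : Type*} [MeasurableSpace E]
    (π : Measure E) {A F : Set E} (hAfin : π A ≠ ⊤) (hF : MeasurableSet F) :
    (π (Fᶜ ∩ A)).toReal = (π A).toReal - (π (F ∩ A)).toReal := by
  have h1 : π (A ∩ F) + π (A \ F) = π A := measure_inter_add_diff A hF
  have hfin1 : π (A ∩ F) ≠ ⊤ :=
    fun h => hAfin (top_le_iff.mp (h ▸ measure_mono Set.inter_subset_left))
  have hfin2 : π (A \ F) ≠ ⊤ :=
    fun h => hAfin (top_le_iff.mp (h ▸ measure_mono Set.diff_subset))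
  have := congrArg ENNReal.toReal h1
  rw [ENNReal.toReal_add hfin1 hfin2] at this
  have e1 : Fᶜ ∩ A = A \ F := by rw [Set.diff_eq, Set.inter_comm]
  have e2 : F ∩ A = A ∩ F := Set.inter_comm _ _
  rw [e1, e2]
  linarith

lemma sup_eq_sum_max {E : Type*} [MeasurableSpace E]
    (π : Measure E) (B : Set E) (hB : MeasurableSet B)
    (hBpos : 0 < π B) (hBfin : π B < ⊤)
    {n : ℕ} (A : Fin n → Set E) (hAmeas : ∀ i, MeasurableSet (A i))
    (hAB : ∀ i, A i ⊆ B) (hAdisj : Pairwise (Function.onFun Disjoint A))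
    (hApos : ∀ i, 0 < π (A i))
    (a : Fin n → ℝ) (ha : ∀ i, 0 ≤ a i) (hasum : ∑ i, a i = 1) :
    (⨆ F : {F : Set E // MeasurableSet F},
        |(∑ i, a i * condMeas π (A i) F.1) - condMeas π B F.1|)
      = ∑ i, max (a i - (π (A i)).toReal / (π B).toReal) 0 := by
  set b : ℝ := (π B).toReal with hbdef
  have hb : 0 < b := ENNReal.toReal_pos hBpos.ne' hBfin.ne
  have hAfin : ∀ i, π (A i) ≠ ⊤ :=
    fun i => (lt_of_le_of_lt (measure_mono (hAB i)) hBfin).ne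
  set α : Fin n → ℝ := fun i => (π (A i)).toReal with hαdef
  have hα : ∀ i, 0 < α i := fun i =>
    ENNReal.toReal_pos (hApos i).ne' (hAfin i)
  set S : ℝ := ∑ i, max (a i - α i / b) 0 with hSdef
  have hS0 : 0 ≤ S := Finset.sum_nonneg fun i _ => le_max_right _ _
  have hcondA : ∀ (F : Set E) i, condMeas π (A i) F = (π (F ∩ A i)).toReal / α i :=
    fun F i => rfl
  have hcondB : ∀ F : Set E, condMeas π B F = (π (F ∩ B)).toReal / b :=
    fun F => rfl
  -- key one-sided bound
  have key : ∀ F : Set E, MeasurableSet F →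
      (∑ i, a i * condMeas π (A i) F) - condMeas π B F ≤ S := by
    intro F hF
    set x : Fin n → ℝ := fun i => (π (F ∩ A i)).toReal with hxdef
    have hx0 : ∀ i, 0 ≤ x i := fun i => ENNReal.toReal_nonneg
    have hxle : ∀ i, x i ≤ α i := fun i =>
      ENNReal.toReal_mono (hAfin i) (measure_mono Set.inter_subset_right)
    have hFBfin : π (F ∩ B) ≠ ⊤ :=
      (lt_of_le_of_lt (measure_mono Set.inter_subset_right) hBfin).ne
    have hsum : ∑ i, x i ≤ (π (F ∩ B)).toReal := by
      have hpd : ((Finset.univ : Finset (Fin n)) : Set (Fin n)).PairwiseDisjoint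
          (fun i => F ∩ A i) := fun i _ j _ hij =>
        ((hAdisj hij).mono Set.inter_subset_right Set.inter_subset_right)
      have h1 : π (⋃ i ∈ Finset.univ, F ∩ A i) = ∑ i, π (F ∩ A i) :=
        measure_biUnion_finset hpd fun i _ => hF.inter (hAmeas i)
      have h2 : π (⋃ i ∈ Finset.univ, F ∩ A i) ≤ π (F ∩ B) := by
        refine measure_mono (Set.iUnion₂_subset fun i _ => ?_)
        exact Set.inter_subset_inter_right F (hAB i)
      calc ∑ i, x i = (∑ i, π (F ∩ A i)).toReal :=
            (ENNReal.toReal_sum fun i _ =>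
              (lt_of_le_of_lt (measure_mono Set.inter_subset_right)
                ((hAfin i).lt_top)).ne).symm
        _ ≤ (π (F ∩ B)).toReal :=
            ENNReal.toReal_mono hFBfin (h1 ▸ h2)
    have hy0 : 0 ≤ (π (F ∩ B)).toReal := ENNReal.toReal_nonneg
    calc (∑ i, a i * condMeas π (A i) F) - condMeas π B F
        = (∑ i, a i * (x i / α i)) - (π (F ∩ B)).toReal / b := rfl
      _ ≤ (∑ i, a i * (x i / α i)) - (∑ i, x i) / b := by
          gcongr
      _ = ∑ i, (x i / α i) * (a i - α i / b) := by
          rw [Finset.sum_div, ← Finset.sum_sub_distrib]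
          refine Finset.sum_congr rfl fun i _ => ?_
          have h1 : α i ≠ 0 := (hα i).ne'
          have h2 : b ≠ 0 := hb.ne'
          field_simp
      _ ≤ ∑ i, max (a i - α i / b) 0 := by
          refine Finset.sum_le_sum fun i _ => ?_
          rcases le_or_gt (a i - α i / b) 0 with h | h
          · exact le_trans (mul_nonpos_of_nonneg_of_nonpos
              (div_nonneg (hx0 i) (hα i).le) h) (le_max_right _ _)
          · refine le_trans ?_ (le_max_left _ _)
            have h1 : x i / α i ≤ 1 := (div_le_one (hα i)).mpr (hxle i)
            calc x i / α i * (a i - α i / b) ≤ 1 * (a i - α i / b) := by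
                  gcongr
              _ = a i - α i / b := one_mul _
  -- two-sided bound via complements
  have bound : ∀ F : Set E, MeasurableSet F →
      |(∑ i, a i * condMeas π (A i) F) - condMeas π B F| ≤ S := by
    intro F hF
    rw [abs_le]
    refine ⟨?_, key F hF⟩
    have hμc : ∑ i, a i * condMeas π (A i) Fᶜ
        = 1 - ∑ i, a i * condMeas π (A i) F := by
      have : ∀ i, condMeas π (A i) Fᶜ = 1 - condMeas π (A i) F := by
        intro i
        rw [hcondA, hcondA, toReal_compl_inter π (hAfin i) hF, sub_div,
          div_self (hα i).ne']
      simp_rw [this, mul_sub, mul_one, Finset.sum_sub_distrib, hasum]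
    have hνc : condMeas π B Fᶜ = 1 - condMeas π B F := by
      rw [hcondB, hcondB, toReal_compl_inter π hBfin.ne hF, sub_div,
        div_self hb.ne']
    have := key Fᶜ hF.compl
    rw [hμc, hνc] at this
    linarith
  -- attainment
  set T : Finset (Fin n) := Finset.univ.filter (fun i => α i / b < a i) with hTdef
  set F₀ : Set E := ⋃ i ∈ T, A i with hF₀def
  have hF₀ : MeasurableSet F₀ := measurableSet_biUnion T fun i _ => hAmeas i
  have hvalA : ∀ i, condMeas π (A i) F₀ = if i ∈ T then 1 else 0 := by
    intro i
    by_cases hi : i ∈ T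
    · have : F₀ ∩ A i = A i := by
        rw [Set.inter_eq_right]
        exact Set.subset_biUnion_of_mem hi
      rw [hcondA, this, if_pos hi, div_self (hα i).ne']
    · have : F₀ ∩ A i = ∅ := by
        refine Set.disjoint_iff_inter_eq_empty.mp (Set.disjoint_left.mpr ?_)
        intro y hy hyA
        obtain ⟨j, hj, hyj⟩ := Set.mem_iUnion₂.mp hy
        have hji : j ≠ i := fun h => hi (h ▸ hj)
        exact (hAdisj hji).le_bot ⟨hyj, hyA⟩
      rw [hcondA, this, if_neg hi, measure_empty, ENNReal.toReal_zero, zero_div]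
  have hμF₀ : ∑ i, a i * condMeas π (A i) F₀ = ∑ i ∈ T, a i := by
    simp_rw [hvalA, mul_ite, mul_one, mul_zero]
    rw [Finset.sum_ite_mem, Finset.univ_inter]
  have hνF₀ : condMeas π B F₀ = ∑ i ∈ T, α i / b := by
    have h1 : F₀ ∩ B = F₀ := by
      rw [Set.inter_eq_left]
      exact Set.iUnion₂_subset fun i _ => hAB i
    have hpd : (T : Set (Fin n)).PairwiseDisjoint A := fun i _ j _ hij => hAdisj hij
    have h2 : π F₀ = ∑ i ∈ T, π (A i) :=
      measure_biUnion_finset hpd fun i _ => hAmeas i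
    rw [hcondB, h1, h2, ENNReal.toReal_sum fun i _ => hAfin i, Finset.sum_div]
  have hSalt : S = ∑ i ∈ T, (a i - α i / b) := by
    rw [hSdef, hTdef, Finset.sum_filter]
    refine Finset.sum_congr rfl fun i _ => ?_
    by_cases h : α i / b < a i
    · rw [if_pos h, max_eq_left (by linarith)]
    · rw [if_neg h, max_eq_right (by push_neg at h; linarith)]
  have hattain : |(∑ i, a i * condMeas π (A i) F₀) - condMeas π B F₀| = S := by
    rw [hμF₀, hνF₀, ← Finset.sum_sub_distrib, ← hSalt, abs_of_nonneg hS0]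
  -- conclusion
  have hbdd : BddAbove (Set.range fun F : {F : Set E // MeasurableSet F} =>
      |(∑ i, a i * condMeas π (A i) F.1) - condMeas π B F.1|) := by
    refine ⟨S, ?_⟩
    rintro _ ⟨F, rfl⟩
    exact bound F.1 F.2
  refine le_antisymm (ciSup_le fun F => bound F.1 F.2) ?_
  exact le_ciSup_of_le hbdd ⟨F₀, hF₀⟩ (le_of_eq hattain.symm)

/-- If `π_k(A_i)/π_k(B) → ν_i ∈ [0,1)` for pairwise disjoint measurable sets
`A_i ⊆ B`, then the total variation distance between the mixture `Σᵢ aᵢ π_k^{Aᵢ}`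
and `π_k^B` converges to `Σ_{i : aᵢ > νᵢ} (aᵢ − νᵢ)`. -/
theorem dTV_mixture_cond_tendsto {E : Type*} [MeasurableSpace E]
    (π : ℕ → Measure E) (B : Set E) (hB : MeasurableSet B)
    (hBpos : ∀ k, 0 < π k B) (hBfin : ∀ k, π k B < ⊤)
    (n : ℕ) (A : Fin n → Set E)
    (hAmeas : ∀ i, MeasurableSet (A i))
    (hAB : ∀ i, A i ⊆ B)
    (hAdisj : Pairwise (Function.onFun Disjoint A))
    (hApos : ∀ k i, 0 < π k (A i))
    (ν : Fin n → ℝ)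
    (hν : ∀ i, Tendsto (fun k => (π k (A i)).toReal / (π k B).toReal)
      atTop (𝓝 (ν i)))
    (hνIco : ∀ i, ν i ∈ Set.Ico (0 : ℝ) 1)
    (a : Fin n → ℝ) (ha : ∀ i, 0 ≤ a i) (hasum : ∑ i, a i = 1) :
    Tendsto (fun k =>
        ⨆ F : {F : Set E // MeasurableSet F},
          |(∑ i, a i * condMeas (π k) (A i) F.1) - condMeas (π k) B F.1|)
      atTop
      (𝓝 (∑ i ∈ Finset.univ.filter (fun i => ν i < a i), (a i - ν i))) := by
  have heq : ∀ k, (⨆ F : {F : Set E // MeasurableSet F},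
      |(∑ i, a i * condMeas (π k) (A i) F.1) - condMeas (π k) B F.1|)
      = ∑ i, max (a i - (π k (A i)).toReal / (π k B).toReal) 0 := fun k =>
    sup_eq_sum_max (π k) B hB (hBpos k) (hBfin k) A hAmeas hAB hAdisj
      (hApos k) a ha hasum
  have htarget : (∑ i ∈ Finset.univ.filter (fun i => ν i < a i), (a i - ν i))
      = ∑ i, max (a i - ν i) 0 := by
    rw [Finset.sum_filter]
    refine Finset.sum_congr rfl fun i _ => ?_
    by_cases h : ν i < a i
    · rw [if_pos h, max_eq_left (by linarith)]
    · rw [if_neg h, max_eq_right (by push_neg at h; linarith)]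
  simp_rw [heq, htarget]
  exact tendsto_finset_sum _ fun i _ =>
    ((tendsto_const_nhds.sub (hν i)).max tendsto_const_nhds)
end

section
/- Let U : ℝ^d → ℝ be measurable and let A ⊆ B ⊆ ℝ^d be Lebesgue-measurable sets with B of finite Lebesgue measure. Suppose there exist m ∈ ℝ and δ₀ > 0 such that (i) U(x) ≥ m for all x ∈ B, (ii) U(x) ≥ m + δ₀ for all x ∈ B ∖ A, and (iii) for every δ > 0 the set {x ∈ A : U(x) < m + δ} has positive Lebesgue measure. Then lim_{ε → 0⁺} (∫_A e^{−U(x)/ε} dx) / (∫_B e^{−U(x)/ε} dx) = 1; that is, the Gibbs measure with density proportional to e^{−U(x)/ε} on B asymptotically concentrates all of its mass on A as the temperature ε tends to 0. -/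
open MeasureTheory Filter Topology Real Set

/-!
On `B \ A` the Boltzmann weight `exp (-U / ε)` is at most `exp (-(m + δ₀) / ε)`, while `A`
contains a set of positive measure on which `U < m + δ₀ / 2`, so the partition function `Z A`
is at least a positive multiple of `exp (-(m + δ₀ / 2) / ε)`. Hence
`Z (B \ A) / Z A = O(exp (-δ₀ / (2 ε)))` tends to `0`, and
`Z A / Z B = 1 / (1 + Z (B \ A) / Z A)` tends to `1`.
-/

lemma tendsto_div_add_of_tendsto_div_zero {ι : Type*} {l : Filter ι} {f g : ι → ℝ}
    (hf : ∀ᶠ i in l, f i ≠ 0) (hgf : Tendsto (fun i => g i / f i) l (𝓝 0)) :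
    Tendsto (fun i => f i / (f i + g i)) l (𝓝 1) := by
  have h := ((tendsto_const_nhds (x := (1 : ℝ))).add hgf).inv₀ (by norm_num)
  rw [add_zero, inv_one] at h
  refine h.congr' ?_
  filter_upwards [hf] with i hi
  field_simp

lemma tendsto_exp_neg_div_nhdsGT_zero {c : ℝ} (hc : 0 < c) :
    Tendsto (fun ε => exp (-c / ε)) (𝓝[>] 0) (𝓝 0) := by
  have h : Tendsto (fun ε : ℝ => -c / ε) (𝓝[>] 0) atBot := by
    simpa only [div_eq_mul_inv] using
      tendsto_inv_nhdsGT_zero.const_mul_atTop_of_neg (neg_lt_zero.2 hc)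
  exact tendsto_exp_atBot.comp h

lemma exp_neg_div_le_exp_neg_div {a b ε : ℝ} (hε : 0 ≤ ε) (hab : a ≤ b) :
    exp (-b / ε) ≤ exp (-a / ε) :=
  exp_le_exp.2 (div_le_div_of_nonneg_right (neg_le_neg hab) hε)

section PartitionFunction

variable {α : Type*} [MeasurableSpace α]

noncomputable def partitionFunction (μ : Measure α) (U : α → ℝ) (s : Set α) (ε : ℝ) : ℝ :=
  ∫ x in s, exp (-U x / ε) ∂μ

variable {μ : Measure α} {U : α → ℝ} {s t : Set α} {ε c : ℝ}

lemma partitionFunction_nonneg : 0 ≤ partitionFunction μ U s ε :=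
  integral_nonneg fun _ => (exp_pos _).le

lemma integrableOn_exp_neg_div (hU : Measurable U) (hs : MeasurableSet s) (hμs : μ s ≠ ⊤)
    (hε : 0 ≤ ε) (hc : ∀ x ∈ s, c ≤ U x) :
    IntegrableOn (fun x => exp (-U x / ε)) s μ :=
  Measure.integrableOn_of_bounded (M := exp (-c / ε)) hμs (by fun_prop) <|
    (ae_restrict_iff' hs).2 <| .of_forall fun x hx => by
      rw [norm_of_nonneg (exp_pos _).le]
      exact exp_neg_div_le_exp_neg_div hε (hc x hx)

lemma partitionFunction_le (hμs : μ s ≠ ⊤) (hε : 0 ≤ ε) (hc : ∀ x ∈ s, c ≤ U x) :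
    partitionFunction μ U s ε ≤ exp (-c / ε) * μ.real s :=
  (le_abs_self _).trans <|
    norm_setIntegral_le_of_norm_le_const (f := fun x => exp (-U x / ε)) hμs.lt_top fun x hx => by
      rw [norm_of_nonneg (exp_pos _).le]
      exact exp_neg_div_le_exp_neg_div hε (hc x hx)

lemma exp_mul_le_partitionFunction (ht : MeasurableSet t) (hμt : μ t ≠ ⊤) (hts : t ⊆ s)
    (hint : IntegrableOn (fun x => exp (-U x / ε)) s μ) (hε : 0 ≤ ε) (hc : ∀ x ∈ t, U x ≤ c) :
    exp (-c / ε) * μ.real t ≤ partitionFunction μ U s ε :=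
  (setIntegral_ge_of_const_le_real ht hμt
      (fun x hx => exp_neg_div_le_exp_neg_div hε (hc x hx))
      (hint.mono_set hts)).trans
    (setIntegral_mono_set hint (.of_forall fun _ => (exp_pos _).le) (.of_forall hts))

lemma partitionFunction_pos (hint : IntegrableOn (fun x => exp (-U x / ε)) s μ)
    (hμs : 0 < μ s) : 0 < partitionFunction μ U s ε := by
  rw [partitionFunction, integral_pos_iff_support_of_nonneg (fun _ => (exp_pos _).le) hint]
  simpa [Function.support, (exp_pos _).ne'] using hμs

theorem tendsto_partitionFunction_div_zero {r : Set α} {a b : ℝ} (hab : a < b)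
    (hint : ∀ ε, 0 < ε → IntegrableOn (fun x => exp (-U x / ε)) s μ)
    (ht : MeasurableSet t) (hts : t ⊆ s) (hμt : 0 < μ t) (hμt' : μ t ≠ ⊤)
    (hta : ∀ x ∈ t, U x ≤ a) (hμr : μ r ≠ ⊤) (hrb : ∀ x ∈ r, b ≤ U x) :
    Tendsto (fun ε => partitionFunction μ U r ε / partitionFunction μ U s ε)
      (𝓝[>] 0) (𝓝 0) := by
  have hμt_real : 0 < μ.real t := ENNReal.toReal_pos hμt.ne' hμt'
  have hbound : ∀ ε, 0 < ε → partitionFunction μ U r ε / partitionFunction μ U s ε ≤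
      μ.real r / μ.real t * exp (-(b - a) / ε) := by
    intro ε hε
    calc partitionFunction μ U r ε / partitionFunction μ U s ε
        ≤ exp (-b / ε) * μ.real r / (exp (-a / ε) * μ.real t) :=
          div_le_div₀ (by positivity) (partitionFunction_le hμr hε.le hrb) (by positivity)
            (exp_mul_le_partitionFunction ht hμt' hts (hint ε hε) hε.le hta)
      _ = μ.real r / μ.real t * exp (-(b - a) / ε) := by
          rw [show -(b - a) / ε = -b / ε - -a / ε by ring, exp_sub]
          field_simp
  have hlim := (tendsto_exp_neg_div_nhdsGT_zero (sub_pos.2 hab)).const_mul (μ.real r / μ.real t)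
  rw [mul_zero] at hlim
  refine squeeze_zero' ?_ ?_ hlim
  · exact .of_forall fun _ => div_nonneg partitionFunction_nonneg partitionFunction_nonneg
  · filter_upwards [self_mem_nhdsWithin] with ε hε using hbound ε hε

end PartitionFunction

/-- Laplace-type concentration of the Gibbs measure: if `U ≥ m` on `B`,
`U ≥ m + δ₀` on `B ∖ A`, and `A` contains points with energy arbitrarily close
to `m` (in the sense of positive Lebesgue measure of `{x ∈ A : U x < m + δ}`
for every `δ > 0`), then `∫_A e^{−U/ε} / ∫_B e^{−U/ε} → 1` as `ε → 0⁺`. -/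
theorem gibbs_concentration (d : ℕ) (U : (Fin d → ℝ) → ℝ) (hU : Measurable U)
    (A B : Set (Fin d → ℝ))
    (hA : MeasurableSet A) (hB : MeasurableSet B) (hAB : A ⊆ B)
    (hBfin : volume B < ⊤)
    (m δ₀ : ℝ) (hδ₀ : 0 < δ₀)
    (hlow : ∀ x ∈ B, m ≤ U x)
    (hgap : ∀ x ∈ B \ A, m + δ₀ ≤ U x)
    (hnear : ∀ δ : ℝ, 0 < δ → 0 < volume {x ∈ A | U x < m + δ}) :
    Tendsto (fun ε : ℝ =>
        (∫ x in A, Real.exp (-(U x) / ε)) / (∫ x in B, Real.exp (-(U x) / ε)))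
      (𝓝[>] 0) (𝓝 1) := by
  have hint : ∀ ε, 0 < ε → IntegrableOn (fun x => exp (-U x / ε)) B volume :=
    fun ε hε => integrableOn_exp_neg_div hU hB hBfin.ne hε.le hlow
  set S := {x ∈ A | U x < m + δ₀ / 2}
  have hSA : S ⊆ A := sep_subset _ _
  have hμS : 0 < volume S := hnear _ (half_pos hδ₀)
  have hratio := tendsto_partitionFunction_div_zero (by linarith : m + δ₀ / 2 < m + δ₀)
    (fun ε hε => (hint ε hε).mono_set hAB) (hA.inter (hU measurableSet_Iio)) hSA hμS
    ((measure_mono (hSA.trans hAB)).trans_lt hBfin).ne (fun x hx => hx.2.le)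
    ((measure_mono sdiff_subset).trans_lt hBfin).ne hgap
  refine (tendsto_div_add_of_tendsto_div_zero ?_ hratio).congr' ?_
  · filter_upwards [self_mem_nhdsWithin] with ε hε
    exact (partitionFunction_pos ((hint ε hε).mono_set hAB) (hμS.trans_le (measure_mono hSA))).ne'
  · filter_upwards [self_mem_nhdsWithin] with ε hε
    rw [partitionFunction, partitionFunction, setIntegral_sdiff hA (hint ε hε) hAB,
      add_sub_cancel]
end
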